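/- Wilton's formula: for Re s > 1, Re a > 0, and complex b with |b| < |a|, the Hurwitz zeta function satisfies ζ(s, a+b) = ∑_{j=0}^∞ ((-b)^j / j!)·(s)_j·ζ(s+j, a). -/

import Mathlib

/-!
Expand `(n + a + b) ^ (-s)` in the Taylor series of `z ↦ z ^ (-s)` about `n + a`. Since
`Re (n + a) > 0`, the disc of radius `‖n + a‖ ≥ ‖a‖ > ‖b‖` about `n + a` avoids the branch cut,
so the expansion is valid, and its `j`-th term is bounded by the `j`-th term at `n = 0` times
`‖(n + a) ^ (-s)‖`, up to a constant. Hence the double series over `(j, n)` converges absolutely,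
and summing it in either order gives the two sides of the formula.
-/

/-- Hurwitz zeta function for `Re s > 1`, `Re a > 0`. -/
noncomputable def hurwitzZeta' (s a : ℂ) : ℂ := ∑' n : ℕ, ((n : ℂ) + a) ^ (-s)

open Complex
open scoped Nat

lemma Complex.ball_norm_subset_slitPlane {w : ℂ} (hw : 0 < w.re) :
    Metric.ball w ‖w‖ ⊆ slitPlane := by
  intro z hz
  rw [mem_slitPlane_iff]
  by_contra! h
  obtain ⟨hre, him⟩ := h
  have : ‖w‖ ^ 2 ≤ ‖z - w‖ ^ 2 := by
    simp only [Complex.sq_norm, normSq_apply, sub_re, sub_im, him]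
    nlinarith
  have := mem_ball_iff_norm.mp hz
  nlinarith [norm_nonneg (z - w)]

lemma Complex.iteratedDeriv_cpow_const (c : ℂ) (n : ℕ) :
    Set.EqOn (iteratedDeriv n fun z : ℂ => z ^ c)
      (fun z => (descPochhammer ℂ n).eval c * z ^ (c - n)) slitPlane := by
  induction n with
  | zero => intro z _; simp
  | succ n ih =>
    intro z hz
    rw [iteratedDeriv_succ, (ih.eventuallyEq_of_mem (isOpen_slitPlane.mem_nhds hz)).deriv_eq,
      ((hasStrictDerivAt_cpow_const hz).hasDerivAt.const_mul _).deriv]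
    simp only [descPochhammer_succ_right, Polynomial.eval_mul, Polynomial.eval_sub,
      Polynomial.eval_X, Polynomial.eval_natCast, Nat.cast_succ]
    ring_nf

lemma Complex.norm_cpow_le_rpow_mul_exp (z w : ℂ) :
    ‖z ^ w‖ ≤ ‖z‖ ^ w.re * Real.exp (Real.pi * |w.im|) := by
  refine (norm_cpow_le z w).trans ?_
  rw [div_eq_mul_inv, ← Real.exp_neg]
  gcongr
  calc -(arg z * w.im) ≤ |arg z| * |w.im| := by rw [← abs_mul]; exact neg_le_abs _
    _ ≤ Real.pi * |w.im| := by gcongr; exact abs_arg_le_pi z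

lemma norm_le_norm_natCast_add {a : ℂ} (ha : 0 ≤ a.re) (n : ℕ) : ‖a‖ ≤ ‖(n : ℂ) + a‖ := by
  rw [← sq_le_sq₀ (norm_nonneg _) (norm_nonneg _), Complex.sq_norm, Complex.sq_norm, normSq_apply,
    normSq_apply]
  simp only [add_re, natCast_re, add_im, natCast_im, zero_add]
  nlinarith [n.cast_nonneg (α := ℝ)]

noncomputable def cpowTaylorTerm (s w b : ℂ) (j : ℕ) : ℂ :=
  (-b) ^ j / j ! * (ascPochhammer ℂ j).eval s * w ^ (-s - j)

lemma hasSum_cpowTaylorTerm (s : ℂ) {w b : ℂ} (hw : 0 < w.re) (hb : ‖b‖ < ‖w‖) :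
    HasSum (cpowTaylorTerm s w b) ((w + b) ^ (-s)) := by
  have hdiff : DifferentiableOn ℂ (fun z : ℂ => z ^ (-s)) (Metric.ball w ‖w‖) := fun z hz =>
    (differentiableAt_id.cpow_const (ball_norm_subset_slitPlane hw hz)).differentiableWithinAt
  have hwb : w + b ∈ Metric.ball w ‖w‖ := by simpa using hb
  refine (hasSum_taylorSeries_on_ball hdiff hwb).congr_fun fun j => ?_
  have hw0 : w ∈ slitPlane := ball_norm_subset_slitPlane hw (Metric.mem_ball_self (by
    simpa using (norm_nonneg b).trans_lt hb))
  have hdesc : (descPochhammer ℂ j).eval (-s) = (-1) ^ j * (ascPochhammer ℂ j).eval s := by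
    have h := ascPochhammer_eval_neg_eq_descPochhammer (R := ℂ) (-s) j
    rw [neg_neg] at h
    rw [h, ← mul_assoc, ← mul_pow, neg_one_mul, neg_neg, one_pow, one_mul]
  rw [iteratedDeriv_cpow_const (-s) j hw0, hdesc, cpowTaylorTerm, add_sub_cancel_left,
    smul_eq_mul, smul_eq_mul, neg_pow b]
  ring

lemma norm_cpowTaylorTerm (s w b : ℂ) (j : ℕ) (hw : w ≠ 0) :
    ‖cpowTaylorTerm s w b j‖ = ‖(-b) ^ j / j ! * (ascPochhammer ℂ j).eval s‖ *
      ‖w ^ (-s)‖ / ‖w‖ ^ j := by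
  rw [cpowTaylorTerm, cpow_sub _ _ hw, cpow_natCast]
  simp only [norm_mul, norm_div, norm_pow]
  ring

lemma summable_norm_natCast_add_cpow_neg {a s : ℂ} (ha : 0 < a.re) (hs : 1 < s.re) :
    Summable fun n : ℕ => ‖((n : ℂ) + a) ^ (-s)‖ := by
  refine Summable.of_nonneg_of_le (fun _ => norm_nonneg _) (fun n => ?_)
    (((Real.summable_one_div_nat_add_rpow a.re s.re).mpr hs).mul_right
      (Real.exp (Real.pi * |s.im|)))
  have hpos : 0 < (n : ℝ) + a.re := by positivity
  refine (norm_cpow_le_rpow_mul_exp _ _).trans ?_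
  rw [neg_re, neg_im, abs_neg, abs_of_pos hpos, one_div, ← Real.rpow_neg hpos.le]
  gcongr ?_ * _
  refine Real.rpow_le_rpow_of_nonpos hpos ?_ (by linarith)
  simpa using re_le_norm ((n : ℂ) + a)

lemma norm_cpowTaylorTerm_le {s a w : ℂ} (b : ℂ) (ha : a ≠ 0) (haw : ‖a‖ ≤ ‖w‖) (j : ℕ) :
    ‖cpowTaylorTerm s w b j‖ ≤ ‖cpowTaylorTerm s a b j‖ * (‖w ^ (-s)‖ / ‖a ^ (-s)‖) := by
  have hw : w ≠ 0 := norm_pos_iff.mp ((norm_pos_iff.mpr ha).trans_le haw)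
  have has : ‖a ^ (-s)‖ ≠ 0 := norm_ne_zero_iff.mpr (cpow_ne_zero_iff.mpr (.inl ha))
  rw [norm_cpowTaylorTerm s w b j hw, norm_cpowTaylorTerm s a b j ha, div_mul_div_comm,
    mul_right_comm _ _ ‖w ^ (-s)‖, mul_div_mul_right _ _ has]
  gcongr

lemma summable_cpowTaylorTerm_natCast_add {s a : ℂ} (b : ℂ) (hs : 1 < s.re) (ha : 0 < a.re)
    (hb : ‖b‖ < ‖a‖) : Summable fun p : ℕ × ℕ => cpowTaylorTerm s ((p.2 : ℂ) + a) b p.1 := by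
  have ha0 : a ≠ 0 := fun h => by simp [h] at ha
  have hTaylor : Summable fun j => ‖cpowTaylorTerm s a b j‖ :=
    summable_norm_iff.mpr (hasSum_cpowTaylorTerm s ha hb).summable
  have hzeta := (summable_norm_natCast_add_cpow_neg ha hs).div_const ‖a ^ (-s)‖
  refine .of_norm_bounded (hTaylor.mul_of_nonneg hzeta (fun _ => norm_nonneg _)
    (fun _ => by positivity)) fun p =>
      norm_cpowTaylorTerm_le b ha0 (norm_le_norm_natCast_add ha.le p.2) p.1

theorem wilton_formula (s a b : ℂ) (hs : 1 < s.re) (ha : 0 < a.re)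
    (hb : ‖b‖ < ‖a‖) :
    HasSum (fun j : ℕ => ((-b) ^ j / j.factorial) * (ascPochhammer ℂ j).eval s *
        hurwitzZeta' (s + j) a)
      (hurwitzZeta' s (a + b)) := by
  set F : ℕ × ℕ → ℂ := fun p => cpowTaylorTerm s ((p.2 : ℂ) + a) b p.1
  have hF : HasSum F (∑' p, F p) := (summable_cpowTaylorTerm_natCast_add b hs ha hb).hasSum
  have hcols : HasSum (fun n : ℕ => ((n : ℂ) + (a + b)) ^ (-s)) (∑' p, F p) := by
    refine ((Equiv.prodComm ℕ ℕ).hasSum_iff.mpr hF).prod_fiberwise fun n => ?_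
    rw [← add_assoc]
    simp only [Function.comp_def, Equiv.prodComm_apply, Prod.swap_prod_mk, F]
    have hna : 0 < ((n : ℂ) + a).re := by
      simp only [add_re, natCast_re]; positivity
    exact hasSum_cpowTaylorTerm s hna (hb.trans_le (norm_le_norm_natCast_add ha.le n))
  rw [hurwitzZeta', hcols.tsum_eq]
  refine hF.prod_fiberwise fun j => ?_
  have hsj : 1 < (s + j).re := by
    simp only [add_re, natCast_re]; linarith [j.cast_nonneg (α := ℝ)]
  have hzeta := (summable_norm_iff.mp (summable_norm_natCast_add_cpow_neg ha hsj)).hasSum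
  exact (hzeta.mul_left _).congr_fun fun n => by simp only [F, cpowTaylorTerm, neg_add']
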